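/- arXiv:2601.22774 — 2 statements merged into one kernel-verified Lean document; each statement's English description precedes it below -/
import Mathlib

section
/- Let R be a commutative 2-torsionfree ring, let r > 2, let n ≥ 3, and let φ be an n-Lie derivation of the full matrix algebra M_r(R) of r × r matrices over R. Then there exists X0 ∈ M_r(R) with [[u,v],X0] = 0 for all u, v ∈ M_r(R) such that for all x1,…,xn ∈ M_r(R) the element φ(x1,…,xn) - [x1,[x2,…,[xn,X0]…]] lies in the center Z(M_r(R)); that is, φ is the sum of an extremal n-derivation and an n-linear centrally-valued mapping. -/
/-- Commutator `[x,y] = x*y - y*x`. -/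
def brk {G : Type*} [Ring G] (x y : G) : G := x * y - y * x

/-- `corner p q x` says `x` lies in the Peirce corner `p * G * q`. -/
def corner {G : Type*} [Ring G] (p q x : G) : Prop := p * x * q = x

/-- `central z` says `z` lies in the center of `G`. -/
def central {G : Type*} [Ring G] (z : G) : Prop := ∀ g : G, z * g = g * z

/-- Membership in the center of the corner algebra `p*G*p`. -/
def cornerCentral {G : Type*} [Ring G] (p a : G) : Prop :=
  corner p p a ∧ ∀ a', corner p p a' → a * a' = a' * a

/-- Membership in `A ∪ B` where `A = eGe`, `B = fGf`, `f = 1 - e`. -/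
def inAB {G : Type*} [Ring G] (e x : G) : Prop :=
  corner e e x ∨ corner (1 - e) (1 - e) x

/-- A Lie biderivation: `R`-bilinear and a Lie derivation in each argument. -/
def IsLieBider (R : Type*) [CommRing R] {A : Type*} [Ring A] [Algebra R A]
    (φ : A → A → A) : Prop :=
  (∀ y : A, IsLinearMap R fun x => φ x y) ∧
  (∀ x : A, IsLinearMap R fun y => φ x y) ∧
  (∀ y a b : A, φ (brk a b) y = brk (φ a y) b + brk a (φ b y)) ∧
  (∀ x a b : A, φ x (brk a b) = brk (φ x a) b + brk a (φ x b))

/-- A 3-Lie derivation: `R`-linear in each argument and a Lie derivation in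
each argument when the other two are fixed. -/
def IsLieDer3 (R : Type*) [CommRing R] {G : Type*} [Ring G] [Algebra R G]
    (ψ : G → G → G → G) : Prop :=
  (∀ y z : G, IsLinearMap R fun x => ψ x y z) ∧
  (∀ x z : G, IsLinearMap R fun y => ψ x y z) ∧
  (∀ x y : G, IsLinearMap R fun z => ψ x y z) ∧
  (∀ y z a b : G, ψ (brk a b) y z = brk (ψ a y z) b + brk a (ψ b y z)) ∧
  (∀ x z a b : G, ψ x (brk a b) z = brk (ψ x a z) b + brk a (ψ x b z)) ∧
  (∀ x y a b : G, ψ x y (brk a b) = brk (ψ x y a) b + brk a (ψ x y b))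

/-- Iterated bracket `[x 0, [x 1, …, [x (n-1), x0]…]]`. -/
def iterBr {G : Type*} [Ring G] : {n : ℕ} → (Fin n → G) → G → G
  | 0, _, x0 => x0
  | _ + 1, x, x0 => brk (x 0) (iterBr (Fin.tail x) x0)

/-- An `n`-Lie derivation: `R`-linear in each argument and a Lie derivation in
each argument when the other arguments are fixed. -/
def IsNLieDer (R : Type*) [CommRing R] {G : Type*} [Ring G] [Algebra R G]
    {n : ℕ} (φ : (Fin n → G) → G) : Prop :=
  ∀ (i : Fin n) (x : Fin n → G),
    (IsLinearMap R fun t => φ (Function.update x i t)) ∧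
    ∀ a b : G, φ (Function.update x i (brk a b)) =
      brk (φ (Function.update x i a)) b + brk a (φ (Function.update x i b))

/-- `M = eG(1-e)` is faithful as a left `eGe`-module and right `(1-e)G(1-e)`-module. -/
def Faithful {G : Type*} [Ring G] (e : G) : Prop :=
  (∀ a, corner e e a → (∀ m, corner e (1 - e) m → a * m = 0) → a = 0) ∧
  (∀ b, corner (1 - e) (1 - e) b → (∀ m, corner e (1 - e) m → m * b = 0) → b = 0)

/-- (H1): `Z(A) = e Z(G) e` and `Z(B) = f Z(G) f`. -/
def H1P {G : Type*} [Ring G] (e : G) : Prop :=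
  (∀ a, cornerCentral e a → ∃ w, central w ∧ a = e * w * e) ∧
  (∀ b, cornerCentral (1 - e) b → ∃ w, central w ∧ b = (1 - e) * w * (1 - e))

/-- The corner algebra `pGp` contains no nonzero central ideal. -/
def NoCentralIdeal {G : Type*} [Ring G] (p : G) : Prop :=
  ¬ ∃ c : G, c ≠ 0 ∧ cornerCentral p c ∧ ∀ a, corner p p a → cornerCentral p (a * c)

/-- (H2): `A` or `B` contains no nonzero central ideal. -/
def H2P {G : Type*} [Ring G] (e : G) : Prop :=
  NoCentralIdeal e ∨ NoCentralIdeal (1 - e)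

/-- (H3): central elements annihilating a nonzero element vanish. -/
def H3P (G : Type*) [Ring G] : Prop :=
  ∀ α a : G, central α → α * a = 0 → a ≠ 0 → α = 0

/-- (H4): if `MN = 0 = NM` then `A` or `B` is noncommutative. -/
def H4P {G : Type*} [Ring G] (e : G) : Prop :=
  (∀ m n, corner e (1 - e) m → corner (1 - e) e n → m * n = 0 ∧ n * m = 0) →
    (∃ a1 a2, corner e e a1 ∧ corner e e a2 ∧ a1 * a2 ≠ a2 * a1) ∨
    (∃ b1 b2, corner (1 - e) (1 - e) b1 ∧ corner (1 - e) (1 - e) b2 ∧ b1 * b2 ≠ b2 * b1)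

/-- (H3'): for `n ∈ N`, `Mn = 0 = nM` implies `n = 0`. -/
def H3prime {G : Type*} [Ring G] (e : G) : Prop :=
  ∀ n, corner (1 - e) e n → (∀ m, corner e (1 - e) m → m * n = 0 ∧ n * m = 0) → n = 0

/-- (H4'): for `m ∈ M`, `Nm = 0 = mN` implies `m = 0`. -/
def H4prime {G : Type*} [Ring G] (e : G) : Prop :=
  ∀ m, corner e (1 - e) m → (∀ n, corner (1 - e) e n → n * m = 0 ∧ m * n = 0) → m = 0

/-- (H5): every special pair of bimodule homomorphisms has standard form. -/
def H5P (R : Type*) [CommRing R] {G : Type*} [Ring G] [Algebra R G] (e : G) : Prop :=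
  ∀ F E : G → G,
    (∀ m, corner e (1 - e) m → corner e (1 - e) (F m)) →
    (∀ n, corner (1 - e) e n → corner (1 - e) e (E n)) →
    (∀ m m', corner e (1 - e) m → corner e (1 - e) m' → F (m + m') = F m + F m') →
    (∀ (r : R) (m), corner e (1 - e) m → F (r • m) = r • F m) →
    (∀ n n', corner (1 - e) e n → corner (1 - e) e n' → E (n + n') = E n + E n') →
    (∀ (r : R) (n), corner (1 - e) e n → E (r • n) = r • E n) →
    (∀ a m b, corner e e a → corner e (1 - e) m → corner (1 - e) (1 - e) b →
      F (a * m * b) = a * F m * b) →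
    (∀ b n a, corner (1 - e) (1 - e) b → corner (1 - e) e n → corner e e a →
      E (b * n * a) = b * E n * a) →
    (∀ m n, corner e (1 - e) m → corner (1 - e) e n →
      F m * n + m * E n = 0 ∧ n * F m + E n * m = 0) →
    ∃ ω0 ω1 : G, cornerCentral e ω0 ∧ cornerCentral (1 - e) ω1 ∧
      (∀ m, corner e (1 - e) m → F m = ω0 * m + m * ω1) ∧
      (∀ n, corner (1 - e) e n → E n = -(n * ω0) - ω1 * n)

/-- (H5'): every `R`-linear derivation of `G` is inner. -/
def DerInner (R : Type*) [CommRing R] (G : Type*) [Ring G] [Algebra R G] : Prop :=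
  ∀ d : G → G, IsLinearMap R d → (∀ x y : G, d (x * y) = d x * y + x * d y) →
    ∃ g : G, ∀ x : G, d x = g * x - x * g


/-!
Every `R`-linear Lie derivation of `Mₙ(R)` is an inner derivation plus a central-valued map
(`LieDerivation.exists_sub_lie_mem_center`): subtracting a suitable `ad g` normalises `D` so that
the relations `[e_aa, e_bb] = 0`, `[e_aa, e_ab] = e_ab`, `[e_ab, e_ba] = e_aa - e_bb` and
`[e_ai, e_ib] = e_ab` force every `D e_ab` into the center.

Freezing all but three arguments of `φ` gives a 3-Lie derivation `ψ`. The value `ψ(e_pp, y, z)`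
vanishes off row `p`, column `p` and the diagonal; as it is inner plus central in `y`, this forces
`ψ(e_pp, y, z) ≡ α(z) [e_pp, y]` modulo the center, and likewise `ψ(e_pp, y, z) ≡ β(y) [e_pp, z]`.
With three distinct indices, evaluating at `y = e_pa`, `z = e_pb` kills `β` and then `α`, so
`ψ(e_pp, y, z)` is central. Then `ψ(e_pq, y, z)` is a multiple of `e_pq`, and the same argument in
`y` makes it central too. By linearity `φ` is central-valued, so `X0 = 0` works.
-/

open Matrix

attribute [local instance] LieRing.ofAssociativeRing

lemma Fintype.exists_ne_ne_of_two_lt_card {n : Type*} [Fintype n] (hn : 2 < Fintype.card n)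
    (i j : n) : ∃ k, k ≠ i ∧ k ≠ j :=
  ENat.exists_ne_ne_of_three_le (by rw [ENat.card_eq_coe_fintype_card]; exact_mod_cast hn) i j

namespace Matrix

variable {n R : Type*} [Fintype n] [DecidableEq n] [CommRing R]

@[simp] lemma mul_single_one_apply (x : Matrix n n R) (k l a b : n) :
    (x * single k l (1 : R)) a b = if b = l then x a k else 0 := by
  split_ifs with h
  · subst h; simp
  · simp [h]

@[simp] lemma single_one_mul_apply (x : Matrix n n R) (k l a b : n) :
    (single k l (1 : R) * x) a b = if a = k then x l b else 0 := by
  split_ifs with h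
  · subst h; simp
  · simp [h]

lemma lie_single_single (a b c d : n) :
    ⁅single a b (1 : R), single c d (1 : R)⁆ =
      (if b = c then single a d 1 else 0) - if d = a then single c b 1 else 0 := by
  rw [Ring.lie_def]
  split_ifs with h1 h2 h2 <;> subst_vars <;> simp [single_mul_single_of_ne, *]

lemma apply_eq_zero_of_mem_center {z : Matrix n n R} (hz : z ∈ Subalgebra.center R _)
    {i j : n} (hij : i ≠ j) : z i j = 0 := by
  simpa [hij] using congr($(Subalgebra.mem_center_iff.1 hz (single j j (1 : R))) i j).symm

lemma apply_self_eq_of_mem_center {z : Matrix n n R} (hz : z ∈ Subalgebra.center R _)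
    (i j : n) : z i i = z j j := by
  simpa using congr($(Subalgebra.mem_center_iff.1 hz (single i j (1 : R))) i j).symm

lemma mem_center_of_apply {z : Matrix n n R} (hoff : ∀ i j, i ≠ j → z i j = 0)
    (hdiag : ∀ i j, z i i = z j j) : z ∈ Subalgebra.center R (Matrix n n R) := by
  rw [Subalgebra.mem_center_iff]
  intro g
  ext a b
  simp only [mul_apply]
  rw [Finset.sum_eq_single b, Finset.sum_eq_single a]
  · rw [hdiag a b, mul_comm]
  · intro c _ hc; rw [hoff _ _ (Ne.symm hc), zero_mul]
  · simp
  · intro c _ hc; rw [hoff _ _ hc, mul_zero]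
  · simp

lemma lie_eq_zero_of_mem_center_left {z : Matrix n n R} (hz : z ∈ Subalgebra.center R _)
    (x : Matrix n n R) : ⁅z, x⁆ = 0 := by
  rw [Ring.lie_def, sub_eq_zero, Subalgebra.mem_center_iff.1 hz x]

lemma lie_eq_zero_of_mem_center_right {z : Matrix n n R} (hz : z ∈ Subalgebra.center R _)
    (x : Matrix n n R) : ⁅x, z⁆ = 0 := by
  rw [Ring.lie_def, sub_eq_zero, Subalgebra.mem_center_iff.1 hz x]

lemma _root_.LinearMap.mem_of_apply_single_mem {M : Type*} [AddCommGroup M] [Module R M]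
    (f : Matrix n n R →ₗ[R] M) {S : Submodule R M} (h : ∀ i j, f (single i j 1) ∈ S)
    (x : Matrix n n R) : f x ∈ S := by
  induction x using Matrix.induction_on' with
  | h_zero => simp
  | h_add x y hx hy => simpa using S.add_mem hx hy
  | h_std_basis i j c =>
    rw [show single i j c = c • single i j (1 : R) by simp, map_smul]
    exact S.smul_mem c (h i j)

def IsArrowhead (p : n) (x : Matrix n n R) : Prop :=
  ∀ i j, i ≠ p → j ≠ p → i ≠ j → x i j = 0

lemma exists_lie_eq_smul_lie_single_self (hn : 2 < Fintype.card n) {h : Matrix n n R} {p : n}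
    (hh : ∀ y : Matrix n n R, IsArrowhead p ⁅h, y⁆) :
    ∃ α : R, ∀ y : Matrix n n R, ⁅h, y⁆ = α • ⁅single p p (1 : R), y⁆ := by
  have hout : ∀ i j, i ≠ p → j ≠ p → i ≠ j → h i j = 0 := fun i j hi hj hij => by
    simpa [Ring.lie_def, hij] using hh (single j j 1) i j hi hj hij
  have hcol : ∀ i, i ≠ p → h i p = 0 := fun i hi => by
    obtain ⟨a, hap, hai⟩ := Fintype.exists_ne_ne_of_two_lt_card hn p i
    simpa [Ring.lie_def, hi, hai.symm] using hh (single p a 1) i a hi hap hai.symm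
  have hrow : ∀ j, j ≠ p → h p j = 0 := fun j hj => by
    obtain ⟨a, hap, haj⟩ := Fintype.exists_ne_ne_of_two_lt_card hn p j
    simpa [Ring.lie_def, hj] using hh (single a p 1) a j hap hj haj
  have hdiag : ∀ i j, i ≠ p → j ≠ p → h i i = h j j := fun i j hi hj => by
    rcases eq_or_ne i j with rfl | hij
    · rfl
    have := hh (single i j 1) i j hi hj hij
    simp [Ring.lie_def] at this
    linear_combination this
  obtain ⟨q, hqp, -⟩ := Fintype.exists_ne_ne_of_two_lt_card hn p p
  set α := h p p - h q q
  have hdiag' : ∀ i, (h - α • single p p (1 : R)) i i = h q q := fun i => by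
    rcases eq_or_ne i p with rfl | hip
    · simp [α]
    · simp [hdiag i q hip hqp, single_apply_of_row_ne (Ne.symm hip)]
  have hz : h - α • single p p (1 : R) ∈ Subalgebra.center R _ := by
    refine mem_center_of_apply (fun i j hij => ?_) fun i j => by rw [hdiag', hdiag']
    have h0 : single p p (1 : R) i j = 0 :=
      single_apply_of_ne _ _ _ _ _ fun hpp => hij (hpp.1.symm.trans hpp.2)
    rw [Matrix.sub_apply, smul_apply, h0, smul_zero, sub_zero]
    rcases eq_or_ne i p with rfl | hip
    · exact hrow j (Ne.symm hij)
    rcases eq_or_ne j p with rfl | hjp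
    · exact hcol i hip
    · exact hout i j hip hjp hij
  refine ⟨α, fun y => ?_⟩
  rw [← sub_eq_zero, ← smul_lie, ← sub_lie]
  exact lie_eq_zero_of_mem_center_left hz y

lemma mem_center_of_forall_exists_sub_smul_lie_mem_center (hn : 2 < Fintype.card n) {p : n}
    (F : Matrix n n R → Matrix n n R → Matrix n n R)
    (hleft : ∀ z, ∃ α : R, ∀ y, F y z - α • ⁅single p p (1 : R), y⁆ ∈ Subalgebra.center R _)
    (hright : ∀ y, ∃ β : R, ∀ z, F y z - β • ⁅single p p (1 : R), z⁆ ∈ Subalgebra.center R _)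
    (y z : Matrix n n R) : F y z ∈ Subalgebra.center R _ := by
  obtain ⟨a, hap, -⟩ := Fintype.exists_ne_ne_of_two_lt_card hn p p
  obtain ⟨b, hbp, hba⟩ := Fintype.exists_ne_ne_of_two_lt_card hn p a
  obtain ⟨β, hβ⟩ := hright (single p a 1)
  have hβ0 : β = 0 := by
    obtain ⟨α, hα⟩ := hleft (single p b 1)
    have := apply_eq_zero_of_mem_center (sub_mem (hα (single p a 1)) (hβ (single p b 1)))
      (Ne.symm hbp)
    simpa [lie_single_single, hap, hbp, hba, Ne.symm hba] using this
  obtain ⟨α, hα⟩ := hleft z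
  have hα0 : α = 0 := by
    have := apply_eq_zero_of_mem_center (sub_mem (hα (single p a 1)) (hβ z)) (Ne.symm hap)
    simpa [lie_single_single, hap, hβ0] using this
  simpa [hα0] using hα y

end Matrix

namespace LieDerivation

open Matrix

variable {n R : Type*} [Fintype n] [DecidableEq n] [CommRing R]
  (D : LieDerivation R (Matrix n n R) (Matrix n n R))

lemma isArrowhead_apply_single_self (p : n) : IsArrowhead p (D (single p p 1)) := by
  intro i j hip hjp hij
  have h := congr($(D.apply_lie_eq_add (single p p 1) (single i i 1)) i j)
  simpa [Ring.lie_def, hip, Ne.symm hip, hjp, Ne.symm hij] using h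

lemma apply_single_self_apply_of_ne {i j : n} (hij : i ≠ j) :
    D (single i i 1) i j = - D (single j j 1) i j := by
  have h := congr($(D.apply_lie_eq_add (single i i 1) (single j j 1)) i j)
  simp [Ring.lie_def, hij, Ne.symm hij] at h
  linear_combination -h

lemma apply_single_self_apply_self (p i : n) :
    D (single p p 1) i i = D (single p p 1) p p := by
  rcases eq_or_ne i p with rfl | hip
  · rfl
  have h := congr($(D.apply_lie_eq_add (single p p 1) (single p i 1)) p i)
  simp [Ring.lie_def, hip] at h
  linear_combination -h

lemma apply_single_eq_single_of_mem_center (htf : ∀ x : R, x + x = 0 → x = 0) {a b : n}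
    (hab : a ≠ b) (ha : D (single a a 1) ∈ Subalgebra.center R _)
    (hb : D (single b b 1) ∈ Subalgebra.center R _) :
    D (single a b 1) = single a b (D (single a b 1) a b) := by
  set X := D (single a b 1)
  have hleft : X = ⁅single a a (1 : R), X⁆ := by
    have h := D.apply_lie_eq_add (single a a 1) (single a b 1)
    rwa [lie_single_single, if_pos rfl, if_neg hab.symm, sub_zero,
      lie_eq_zero_of_mem_center_left ha, add_zero] at h
  have hright : X = ⁅X, single b b (1 : R)⁆ := by
    have h := D.apply_lie_eq_add (single a b 1) (single b b 1)
    rwa [lie_single_single, if_pos rfl, if_neg hab.symm, sub_zero,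
      lie_eq_zero_of_mem_center_right hb, zero_add] at h
  ext i j
  by_cases hia : i = a
  · subst hia
    by_cases hjb : j = b
    · subst hjb; simp
    · have h := congr($hright i j)
      simp [Ring.lie_def, hjb, hab] at h
      rw [h, single_apply_of_col_ne _ _ (Ne.symm hjb)]
  · have h := congr($hleft i j)
    simp only [Ring.lie_def, Matrix.sub_apply, single_one_mul_apply, mul_single_one_apply,
      if_neg hia, zero_sub] at h
    rw [single_apply_of_row_ne (Ne.symm hia)]
    split_ifs at h with hja
    · subst hja; exact htf _ (by linear_combination h)
    · simpa using h

lemma apply_single_self_mem_center_of_apply_eq_zero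
    (hcol : ∀ a c, c ≠ a → D (single a a 1) c a = 0) (a : n) :
    D (single a a 1) ∈ Subalgebra.center R _ := by
  refine mem_center_of_apply (fun i j hij => ?_) fun i j => by
    rw [apply_single_self_apply_self D a i, apply_single_self_apply_self D a j]
  rcases eq_or_ne j a with rfl | hja
  · exact hcol _ _ hij
  rcases eq_or_ne i a with rfl | hia
  · rw [apply_single_self_apply_of_ne D hij, hcol j i hij, neg_zero]
  · exact D.isArrowhead_apply_single_self a i j hia hja hij

lemma apply_mem_center_of_apply_single_eq_zero (htf : ∀ x : R, x + x = 0 → x = 0) (i₀ : n)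
    (hcol : ∀ a c, c ≠ a → D (single a a 1) c a = 0)
    (hrow : ∀ a, a ≠ i₀ → D (single a i₀ 1) a i₀ = 0) (x : Matrix n n R) :
    D x ∈ Subalgebra.center R _ := by
  have hdiag : ∀ a, D (single a a 1) ∈ Subalgebra.center R _ :=
    D.apply_single_self_mem_center_of_apply_eq_zero hcol
  have hoff : ∀ a b, a ≠ b → D (single a b 1) = single a b (D (single a b 1) a b) :=
    fun a b hab => D.apply_single_eq_single_of_mem_center htf hab (hdiag a) (hdiag b)
  have hto : ∀ a, a ≠ i₀ → D (single a i₀ 1) = 0 := fun a ha => by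
    rw [hoff a i₀ ha, hrow a ha, single_zero]
  have hfrom : ∀ b, b ≠ i₀ → D (single i₀ b 1) = 0 := fun b hb => by
    have h := D.apply_lie_eq_add (single i₀ b 1) (single b i₀ 1)
    rw [lie_single_single, if_pos rfl, if_pos rfl, map_sub, hto b hb, lie_zero, zero_add,
      hoff i₀ b hb.symm] at h
    have hc := apply_self_eq_of_mem_center (h ▸ sub_mem (hdiag i₀) (hdiag b)) i₀ b
    simp [Ring.lie_def, hb, hb.symm] at hc
    have hzero : D (single i₀ b 1) i₀ b = 0 := htf _ (by linear_combination hc)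
    rw [hoff i₀ b hb.symm, hzero, single_zero]
  have hunit : ∀ a b, D (single a b 1) ∈ Subalgebra.center R _ := by
    intro a b
    rcases eq_or_ne a b with rfl | hab
    · exact hdiag a
    rcases eq_or_ne b i₀ with rfl | hb
    · rw [hto a hab]; exact zero_mem _
    rcases eq_or_ne a i₀ with rfl | ha
    · rw [hfrom b hb]; exact zero_mem _
    have hlie : single a b (1 : R) = ⁅single a i₀ (1 : R), single i₀ b (1 : R)⁆ := by
      simp [lie_single_single, hab.symm]
    rw [hlie, apply_lie_eq_add, hto a ha, hfrom b hb, lie_zero, zero_lie, add_zero]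
    exact zero_mem _
  exact D.toLinearMap.mem_of_apply_single_mem
    (S := Subalgebra.toSubmodule (Subalgebra.center R _)) hunit x

theorem exists_sub_lie_mem_center (htf : ∀ x : R, x + x = 0 → x = 0) :
    ∃ g : Matrix n n R, ∀ x, D x - ⁅g, x⁆ ∈ Subalgebra.center R _ := by
  cases isEmpty_or_nonempty n
  · exact ⟨0, fun x => by simp [Subsingleton.elim x 0]⟩
  obtain ⟨i₀⟩ := ‹Nonempty n›
  -- `g` makes `D - ad g` vanish on column `a` of `D (single a a 1)` off the diagonal and at
  -- entry `(a, i₀)` of `D (single a i₀ 1)`.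
  let g : Matrix n n R := Matrix.of fun c a =>
    if c = a then (if a = i₀ then 0 else D (single a i₀ 1) a i₀) else D (single a a 1) c a
  refine ⟨g, fun x => ?_⟩
  have := (D - ad R _ g).apply_mem_center_of_apply_single_eq_zero htf i₀
    (fun a c hca => by simp [g, Ring.lie_def, hca])
    (fun a ha => by simp [g, Ring.lie_def, ha])
  simpa using this x

lemma exists_sub_smul_lie_single_self_mem_center (htf : ∀ x : R, x + x = 0 → x = 0)
    (hn : 2 < Fintype.card n) {p : n} (hD : ∀ y, IsArrowhead p (D y)) :
    ∃ α : R, ∀ y, D y - α • ⁅single p p (1 : R), y⁆ ∈ Subalgebra.center R _ := by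
  obtain ⟨h, hh⟩ := D.exists_sub_lie_mem_center htf
  obtain ⟨α, hα⟩ := exists_lie_eq_smul_lie_single_self hn (h := h) (p := p)
    fun y i j hi hj hij => by
      have := apply_eq_zero_of_mem_center (hh y) hij
      rwa [Matrix.sub_apply, hD y i j hi hj hij, zero_sub, neg_eq_zero] at this
  exact ⟨α, fun y => hα y ▸ hh y⟩

end LieDerivation

section

variable {R G : Type*} [CommRing R] [Ring G] [Algebra R G]

def LieDerivation.ofBrk (d : G → G) (hlin : IsLinearMap R d)
    (hd : ∀ a b, d (brk a b) = brk (d a) b + brk a (d b)) : LieDerivation R G G where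
  toLinearMap := IsLinearMap.mk' d hlin
  leibniz' a b := by
    simp only [IsLinearMap.mk'_apply, ← lie_skew b]
    rw [sub_neg_eq_add, add_comm]
    exact hd a b

namespace IsLieDer3

variable {ψ : G → G → G → G} (hψ : IsLieDer3 R ψ)

def lieDer₁ (y z : G) : LieDerivation R G G :=
  .ofBrk (fun x => ψ x y z) (hψ.1 y z) (hψ.2.2.2.1 y z)

def lieDer₂ (x z : G) : LieDerivation R G G :=
  .ofBrk (fun y => ψ x y z) (hψ.2.1 x z) (hψ.2.2.2.2.1 x z)

def lieDer₃ (x y : G) : LieDerivation R G G :=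
  .ofBrk (fun z => ψ x y z) (hψ.2.2.1 x y) (hψ.2.2.2.2.2 x y)

@[simp] lemma lieDer₁_apply (x y z : G) : hψ.lieDer₁ y z x = ψ x y z := rfl
@[simp] lemma lieDer₂_apply (x y z : G) : hψ.lieDer₂ x z y = ψ x y z := rfl
@[simp] lemma lieDer₃_apply (x y z : G) : hψ.lieDer₃ x y z = ψ x y z := rfl

end IsLieDer3

end

namespace IsLieDer3

open Matrix

variable {n R : Type*} [Fintype n] [DecidableEq n] [CommRing R]
  {ψ : Matrix n n R → Matrix n n R → Matrix n n R → Matrix n n R} (hψ : IsLieDer3 R ψ)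
  (htf : ∀ x : R, x + x = 0 → x = 0) (hn : 2 < Fintype.card n)

include hψ htf hn

theorem apply_single_self_mem_center (p : n) (y z : Matrix n n R) :
    ψ (single p p 1) y z ∈ Subalgebra.center R _ :=
  mem_center_of_forall_exists_sub_smul_lie_mem_center hn (ψ (single p p 1))
    (fun z => (hψ.lieDer₂ _ z).exists_sub_smul_lie_single_self_mem_center htf hn
      fun y => (hψ.lieDer₁ y z).isArrowhead_apply_single_self p)
    (fun y => (hψ.lieDer₃ _ y).exists_sub_smul_lie_single_self_mem_center htf hn
      fun z => (hψ.lieDer₁ y z).isArrowhead_apply_single_self p) y z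

theorem apply_single_mem_center (p q : n) (y z : Matrix n n R) :
    ψ (single p q 1) y z ∈ Subalgebra.center R _ := by
  rcases eq_or_ne p q with rfl | hpq
  · exact hψ.apply_single_self_mem_center htf hn p y z
  have hline : ∀ y, ψ (single p q 1) y z = single p q (ψ (single p q 1) y z p q) := fun y =>
    (hψ.lieDer₁ y z).apply_single_eq_single_of_mem_center htf hpq
      (hψ.apply_single_self_mem_center htf hn p y z)
      (hψ.apply_single_self_mem_center htf hn q y z)
  obtain ⟨α, hα⟩ := (hψ.lieDer₂ (single p q 1) z).exists_sub_smul_lie_single_self_mem_center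
    htf hn (p := p) fun y i j hip _ _ => by
      rw [lieDer₂_apply, hline y, single_apply_of_row_ne (Ne.symm hip)]
  obtain ⟨m, hmp, hmq⟩ := Fintype.exists_ne_ne_of_two_lt_card hn p q
  have hα0 : α = 0 := by
    have := apply_eq_zero_of_mem_center (hα (single p m 1)) (Ne.symm hmp)
    rw [lieDer₂_apply, hline] at this
    simpa [lie_single_single, hmp, hmq, Ne.symm hmq] using this
  simpa [hα0] using hα y

theorem mem_center (x y z : Matrix n n R) : ψ x y z ∈ Subalgebra.center R _ :=
  (hψ.lieDer₁ y z).toLinearMap.mem_of_apply_single_mem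
    (S := Subalgebra.toSubmodule (Subalgebra.center R _))
    (fun p q => hψ.apply_single_mem_center htf hn p q y z) x

end IsLieDer3

lemma iterBr_zero {G : Type*} [Ring G] : ∀ {n : ℕ} (x : Fin n → G), iterBr x (0 : G) = 0
  | 0, _ => rfl
  | _ + 1, x => by simp [iterBr, iterBr_zero (Fin.tail x), brk]

open Function in
lemma IsNLieDer.isLieDer3_update {R G : Type*} [CommRing R] [Ring G] [Algebra R G] {n : ℕ}
    {φ : (Fin n → G) → G} (hφ : IsNLieDer R φ) (x : Fin n → G) {i j k : Fin n}
    (hij : i ≠ j) (hik : i ≠ k) (hjk : j ≠ k) :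
    IsLieDer3 R fun a b c => φ (update (update (update x i a) j b) k c) := by
  have hi : ∀ a b c, update (update (update x i a) j b) k c =
      update (update (update x j b) k c) i a := fun a b c => by
    rw [update_comm hij, update_comm hik]
  have hj : ∀ a b c, update (update (update x i a) j b) k c =
      update (update (update x i a) k c) j b := fun a b c => by
    rw [update_comm hjk]
  refine ⟨fun b c => ?_, fun a c => ?_, fun a b => (hφ k _).1,
    fun b c a₁ a₂ => ?_, fun a c b₁ b₂ => ?_, fun a b => (hφ k _).2⟩
  · simpa only [hi] using (hφ i (update (update x j b) k c)).1
  · simpa only [hj] using (hφ j (update (update x i a) k c)).1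
  · simpa only [hi] using (hφ i (update (update x j b) k c)).2 a₁ a₂
  · simpa only [hj] using (hφ j (update (update x i a) k c)).2 b₁ b₂

theorem nLieDer_matrix_decomposition {R : Type*} [CommRing R]
    (htf : ∀ x : R, x + x = 0 → x = 0)
    (r : ℕ) (hr : 2 < r) (n : ℕ) (hn : 3 ≤ n)
    (φ : (Fin n → Matrix (Fin r) (Fin r) R) → Matrix (Fin r) (Fin r) R)
    (hφ : IsNLieDer R φ) :
    ∃ X0 : Matrix (Fin r) (Fin r) R,
      (∀ u v : Matrix (Fin r) (Fin r) R, brk (brk u v) X0 = 0) ∧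
      ∀ x : Fin n → Matrix (Fin r) (Fin r) R, central (φ x - iterBr x X0) := by
  refine ⟨0, fun u v => by simp [brk], fun x => ?_⟩
  let i : Fin n := ⟨0, by omega⟩
  let j : Fin n := ⟨1, by omega⟩
  let k : Fin n := ⟨2, by omega⟩
  have hψ := hφ.isLieDer3_update x (i := i) (j := j) (k := k) (by simp [i, j, Fin.ext_iff])
    (by simp [i, k, Fin.ext_iff]) (by simp [j, k, Fin.ext_iff])
  have hcenter := hψ.mem_center htf (by simpa using hr) (x i) (x j) (x k)
  simp only [Function.update_eq_self] at hcenter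
  rw [iterBr_zero, sub_zero]
  exact fun g => (Subalgebra.mem_center_iff.1 hcenter g).symm
end

section
/- Let G be a triangular algebra (as in the context, so the Peirce corner N = fGe is zero) satisfying: (H1) every element of Z(A) has the form e*w*e for some w ∈ Z(G), and every element of Z(B) has the form f*w*f for some w ∈ Z(G); (H2) A contains no nonzero central ideal (there is no nonzero c ∈ Z(A) with a*c ∈ Z(A) for all a ∈ A) or B contains no nonzero central ideal (analogously in B); and (H5') every R-linear derivation d of G (d(x*y) = d(x)*y + x*d(y)) is inner, i.e. of the form d(x) = [g,x] for some fixed g ∈ G. Let n ≥ 3 and let φ : G^n → G be an n-Lie derivation. Set X0 = e*φ(e,…,e)*f, where φ(e,…,e) has all n arguments equal to e. Then [[u,v],X0] = 0 for all u,v ∈ G, and for all x1,…,xn ∈ G the element φ(x1,…,xn) - [x1,[x2,…,[xn,X0]…]] lies in Z(G). -/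
/-!
Every slot of `φ` is a Lie derivation `d`, and a Lie derivation of the triangular algebra maps `M`
into `M` and satisfies `e d(a) (1 - e) = a X` on `A`, `e d(b) (1 - e) = -X b` on `B`, where
`X = e d(e) (1 - e)`. The heart of the proof is that `φ` vanishes as soon as one argument lies in
`M`. If a second argument lies in `M` or equals `e`, the slot map of the first one is an
`(A, B)`-bimodule endomorphism of `M`; as derivations are inner and (H1) holds, it is left
multiplication by some `c ∈ Z(A)` and right multiplication by some `c' ∈ Z(B)`. Feeding elements
of `A` (of `B`) into two further slots in either order shows that `c` (`c'`) annihilates all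
commutators, so it generates a central ideal and (H2) kills it. Expanding the remaining arguments
into Peirce components reduces everything to this case. Once `φ` vanishes on `M`, the `M`-corner
of `φ x` is computed slot by slot as `iterBr x X₀`, and `φ x` commutes with `M`; this is exactly
the centrality of `φ x - iterBr x X₀`.
-/

open Function

section Corner

variable {G : Type*} [Ring G] {p q r s x y : G}

theorem corner.idem_mul (hp : IsIdempotentElem p) (hx : corner p q x) : p * x = x := by
  rw [← hx, ← mul_assoc, ← mul_assoc, hp.eq]

theorem corner.mul_idem (hq : IsIdempotentElem q) (hx : corner p q x) : x * q = x := by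
  rw [← hx, mul_assoc, hq.eq]

theorem corner.mul_left_eq_zero (hx : corner p q x) (hrp : r * p = 0) : r * x = 0 := by
  rw [← hx, ← mul_assoc, ← mul_assoc, hrp, zero_mul, zero_mul]

theorem corner.mul_right_eq_zero (hx : corner p q x) (hqr : q * r = 0) : x * r = 0 := by
  rw [← hx, mul_assoc, hqr, mul_zero]

theorem corner.mul_eq_zero (hx : corner p q x) (hy : corner r s y) (hqr : q * r = 0) :
    x * y = 0 := by
  rw [← hy, ← mul_assoc, ← mul_assoc, hx.mul_right_eq_zero hqr, zero_mul, zero_mul]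

theorem corner.mul (hp : IsIdempotentElem p) (hs : IsIdempotentElem s) (hx : corner p q x)
    (hy : corner q s y) : corner p s (x * y) := by
  rw [corner, ← mul_assoc, hx.idem_mul hp, mul_assoc, hy.mul_idem hs]

theorem corner_mul_mul (hp : IsIdempotentElem p) (hq : IsIdempotentElem q) (g : G) :
    corner p q (p * g * q) := by
  rw [corner, ← mul_assoc, ← mul_assoc, hp.eq, mul_assoc, hq.eq]

theorem corner_zero : corner p q (0 : G) := by
  rw [corner, mul_zero, zero_mul]

theorem corner.sub (hx : corner p q x) (hy : corner p q y) : corner p q (x - y) := by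
  rw [corner, mul_sub, sub_mul, hx, hy]

theorem corner.brk (hp : IsIdempotentElem p) (hx : corner p p x) (hy : corner p p y) :
    corner p p (brk x y) :=
  (hx.mul hp hp hy).sub (hy.mul hp hp hx)

theorem cornerCentral.sub (hx : cornerCentral p x) (hy : cornerCentral p y) :
    cornerCentral p (x - y) :=
  ⟨hx.1.sub hy.1, fun a ha => by rw [sub_mul, mul_sub, hx.2 a ha, hy.2 a ha]⟩

theorem central.mul_corner_eq (hp : IsIdempotentElem p) (hq : IsIdempotentElem q) {w : G}
    (hw : central w) (hx : corner p q x) : p * w * p * x = x * (q * w * q) := by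
  have hl : p * w * p * x = x * w := by
    rw [mul_assoc, hx.idem_mul hp, mul_assoc, hw, ← mul_assoc, hx.idem_mul hp]
  have hr : x * (q * w * q) = x * w := by
    rw [← mul_assoc, ← mul_assoc, hx.mul_idem hq, ← hw x, mul_assoc, hx.mul_idem hq, hw]
  rw [hl, hr]

theorem central.cornerCentral (hp : IsIdempotentElem p) {w : G} (hw : central w) :
    cornerCentral p (p * w * p) :=
  ⟨corner_mul_mul hp hp w, fun _ ha => central.mul_corner_eq hp hp hw ha⟩

theorem NoCentralIdeal.eq_zero (h : NoCentralIdeal p) (hp : IsIdempotentElem p) {c : G}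
    (hc : cornerCentral p c)
    (hbrk : ∀ a a', corner p p a → corner p p a' → c * brk a a' = 0) :
    c = 0 := by
  by_contra hc0
  refine h ⟨c, hc0, hc, fun a ha => ⟨ha.mul hp hp hc.1, fun a' ha' => ?_⟩⟩
  have hcomm : c * (a * a') = c * (a' * a) :=
    sub_eq_zero.mp (by rw [← mul_sub]; exact hbrk a a' ha ha')
  rw [← hc.2 a ha, mul_assoc, hcomm, ← mul_assoc, hc.2 a' ha', mul_assoc, hc.2 a ha]

end Corner

section Idempotent

variable {G : Type*} [Ring G] {e a b m : G}

theorem brk_idem_of_corner (he : IsIdempotentElem e) (hm : corner e (1 - e) m) : brk e m = m := by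
  rw [brk, hm.idem_mul he, hm.mul_right_eq_zero he.one_sub_mul_self, sub_zero]

theorem brk_of_corner_left (he : IsIdempotentElem e) (ha : corner e e a)
    (hm : corner e (1 - e) m) : brk a m = a * m := by
  rw [brk, hm.mul_eq_zero ha he.one_sub_mul_self, sub_zero]

theorem brk_of_corner_right (he : IsIdempotentElem e) (hm : corner e (1 - e) m)
    (hb : corner (1 - e) (1 - e) b) : brk m b = m * b := by
  rw [brk, hb.mul_eq_zero hm he.one_sub_mul_self, sub_zero]

theorem brk_idem_of_corner_left (he : IsIdempotentElem e) (ha : corner e e a) : brk a e = 0 := by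
  rw [brk, ha.mul_idem he, ha.idem_mul he, sub_self]

theorem brk_idem_of_corner_right (he : IsIdempotentElem e) (hb : corner (1 - e) (1 - e) b) :
    brk b e = 0 := by
  rw [brk, hb.mul_right_eq_zero he.one_sub_mul_self, hb.mul_left_eq_zero he.mul_one_sub_self,
    sub_self]

theorem mul_brk_idem_mul (he : IsIdempotentElem e) (x : G) :
    e * brk x e * (1 - e) = -(e * x * (1 - e)) := by
  have h : e * brk x e * (1 - e) = e * x * (e * (1 - e)) - e * e * x * (1 - e) := by
    rw [brk]; noncomm_ring
  rw [h, he.mul_one_sub_self, he.eq, mul_zero, zero_sub]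

theorem mul_brk_mul_of_corner_left (he : IsIdempotentElem e) (ha : corner e e a) (x : G) :
    e * brk a x * (1 - e) = a * (e * x * (1 - e)) := by
  have h : e * brk a x * (1 - e) = e * a * x * (1 - e) - e * x * (a * (1 - e)) := by
    rw [brk]; noncomm_ring
  rw [h, ha.mul_right_eq_zero he.mul_one_sub_self, mul_zero, sub_zero, ha.idem_mul he]
  conv_rhs => rw [← mul_assoc, ← mul_assoc, ha.mul_idem he]

theorem mul_brk_mul_of_corner_right (he : IsIdempotentElem e) (hb : corner (1 - e) (1 - e) b)
    (x : G) : e * brk b x * (1 - e) = -(e * x * (1 - e) * b) := by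
  have h : e * brk b x * (1 - e) = e * b * x * (1 - e) - e * x * (b * (1 - e)) := by
    rw [brk]; noncomm_ring
  rw [h, hb.mul_left_eq_zero he.mul_one_sub_self, hb.mul_idem he.one_sub, zero_mul, zero_mul,
    zero_sub, mul_assoc (e * x), hb.idem_mul he.one_sub]

end Idempotent

/-- `G` is the triangular algebra `[A M; 0 B]` with `A = eGe`, `M = eG(1 - e)`,
`B = (1 - e)G(1 - e)`. -/
structure IsTriangularIdem {G : Type*} [Ring G] (e : G) : Prop where
  idem : IsIdempotentElem e
  compl_mul_mul : ∀ g : G, (1 - e) * g * e = 0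

namespace IsTriangularIdem

variable {G : Type*} [Ring G] {e m : G}

theorem peirce (ht : IsTriangularIdem e) (g : G) :
    e * g * e + e * g * (1 - e) + (1 - e) * g * (1 - e) = g := by
  have h : e * g * e + e * g * (1 - e) + ((1 - e) * g * e + (1 - e) * g * (1 - e)) = g := by
    noncomm_ring
  rwa [ht.compl_mul_mul, zero_add] at h

theorem mul_idem (ht : IsTriangularIdem e) (g : G) : g * e = e * g * e := by
  have h : e * g * e = g * e - (1 - e) * g * e := by noncomm_ring
  rw [h, ht.compl_mul_mul, sub_zero]

theorem compl_mul (ht : IsTriangularIdem e) (g : G) : (1 - e) * g = (1 - e) * g * (1 - e) := by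
  have h : (1 - e) * g * (1 - e) = (1 - e) * g - (1 - e) * g * e := by noncomm_ring
  rw [h, ht.compl_mul_mul, sub_zero]

theorem idem_mul_mul_idem (ht : IsTriangularIdem e) (x y : G) :
    e * (x * y) * e = e * x * e * (e * y * e) := by
  rw [mul_assoc (e * x) e, (corner_mul_mul ht.idem ht.idem y).idem_mul ht.idem, ← ht.mul_idem y]
  noncomm_ring

theorem compl_mul_mul_compl (ht : IsTriangularIdem e) (x y : G) :
    (1 - e) * (x * y) * (1 - e) = (1 - e) * x * (1 - e) * ((1 - e) * y * (1 - e)) := by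
  calc (1 - e) * (x * y) * (1 - e) = (1 - e) * x * (y * (1 - e)) := by noncomm_ring
    _ = (1 - e) * x * (1 - e) * (1 - e) * (y * (1 - e)) := by
      rw [(corner_mul_mul ht.idem.one_sub ht.idem.one_sub x).mul_idem ht.idem.one_sub,
        ← ht.compl_mul x]
    _ = (1 - e) * x * (1 - e) * ((1 - e) * y * (1 - e)) := by noncomm_ring

theorem mul_corner_eq (ht : IsTriangularIdem e) (g : G) (hm : corner e (1 - e) m) :
    g * m = e * g * e * m := by
  rw [← ht.mul_idem, mul_assoc, hm.idem_mul ht.idem]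

theorem corner_mul_eq (ht : IsTriangularIdem e) (g : G) (hm : corner e (1 - e) m) :
    m * g = m * ((1 - e) * g * (1 - e)) := by
  rw [← ht.compl_mul, ← mul_assoc, hm.mul_idem ht.idem.one_sub]

theorem brk_of_corner (ht : IsTriangularIdem e) (g : G) (hm : corner e (1 - e) m) :
    brk g m = e * g * e * m - m * ((1 - e) * g * (1 - e)) := by
  rw [brk, ht.mul_corner_eq g hm, ht.corner_mul_eq g hm]

theorem idem_mul_mul_compl (ht : IsTriangularIdem e) (x y : G) :
    e * (x * y) * (1 - e)
      = e * x * e * (e * y * (1 - e)) + e * x * (1 - e) * ((1 - e) * y * (1 - e)) := by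
  rw [mul_assoc e y, ← mul_assoc (e * x * e), (corner_mul_mul ht.idem ht.idem x).mul_idem ht.idem,
    mul_assoc (e * x) (1 - e),
    (corner_mul_mul ht.idem.one_sub ht.idem.one_sub y).idem_mul ht.idem.one_sub]
  noncomm_ring

theorem corner_brk (ht : IsTriangularIdem e) (g : G) (hm : corner e (1 - e) m) :
    corner e (1 - e) (brk g m) := by
  rw [ht.brk_of_corner g hm]
  exact ((corner_mul_mul ht.idem ht.idem g).mul ht.idem ht.idem.one_sub hm).sub
    (hm.mul ht.idem ht.idem.one_sub (corner_mul_mul ht.idem.one_sub ht.idem.one_sub g))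

theorem corner_iterBr (ht : IsTriangularIdem e) (hm : corner e (1 - e) m) :
    ∀ {k : ℕ} (x : Fin k → G), corner e (1 - e) (iterBr x m)
  | 0, _ => hm
  | _ + 1, x => ht.corner_brk (x 0) (ht.corner_iterBr hm (Fin.tail x))

theorem brk_brk_of_corner (ht : IsTriangularIdem e) (u v : G) (hm : corner e (1 - e) m) :
    brk (brk u v) m = brk (e * u * e) (e * v * e) * m
      - m * brk ((1 - e) * u * (1 - e)) ((1 - e) * v * (1 - e)) := by
  have hA : e * brk u v * e = brk (e * u * e) (e * v * e) := by
    rw [brk, brk, mul_sub e, sub_mul (e * (u * v)), ht.idem_mul_mul_idem, ht.idem_mul_mul_idem]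
  have hB : (1 - e) * brk u v * (1 - e) = brk ((1 - e) * u * (1 - e)) ((1 - e) * v * (1 - e)) := by
    rw [brk, brk, mul_sub (1 - e) (u * v), sub_mul ((1 - e) * (u * v)), ht.compl_mul_mul_compl,
      ht.compl_mul_mul_compl]
  rw [ht.brk_of_corner _ hm, hA, hB]

theorem corner_of_eq_add_brk (ht : IsTriangularIdem e) {ρ μ : G} (hμ : corner e (1 - e) μ)
    (h : ρ = μ + brk e ρ) : μ = 0 ∧ corner e (1 - e) ρ := by
  have hμ0 : μ = 0 := by
    have h1 := congrArg (fun z => e * z * (1 - e)) h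
    have he : corner e e e := by rw [corner, ht.idem.eq, ht.idem.eq]
    simp only [mul_add, add_mul, mul_brk_mul_of_corner_left ht.idem he] at h1
    rw [hμ, (corner_mul_mul ht.idem ht.idem.one_sub ρ).idem_mul ht.idem] at h1
    exact right_eq_add.mp h1
  rw [hμ0, zero_add] at h
  have hρe : ρ * e = 0 := by
    rw [ht.mul_idem, h, brk]
    have h2 : e * (e * ρ - ρ * e) * e = e * e * ρ * e - e * ρ * (e * e) := by noncomm_ring
    rw [h2, ht.idem.eq, sub_self]
  refine ⟨hμ0, ?_⟩
  have h3 : e * ρ * (1 - e) = e * ρ - e * (ρ * e) := by noncomm_ring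
  rw [corner, h3, hρe, mul_zero, sub_zero]
  conv_rhs => rw [h, brk, hρe, sub_zero]

end IsTriangularIdem

structure IsBimodHom {G : Type*} [Ring G] (e : G) (W : G → G) : Prop where
  mapsTo : ∀ m, corner e (1 - e) m → corner e (1 - e) (W m)
  map_mul_left : ∀ a m, corner e e a → corner e (1 - e) m → W (a * m) = a * W m
  map_mul_right : ∀ b m, corner (1 - e) (1 - e) b → corner e (1 - e) m → W (m * b) = W m * b

namespace IsBimodHom

variable {R : Type*} [CommRing R] {G : Type*} [Ring G] [Algebra R G] {e : G} {W : G → G}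

theorem zero : IsBimodHom e fun _ => (0 : G) :=
  ⟨fun _ _ => corner_zero, fun _ _ _ _ => (mul_zero _).symm, fun _ _ _ _ => (zero_mul _).symm⟩

theorem cornerCentral_of_eq (he : IsIdempotentElem e) (hf : Faithful e) (hW : IsBimodHom e W)
    {zA zB : G} (hzA : corner e e zA) (hzB : corner (1 - e) (1 - e) zB)
    (hWz : ∀ m, corner e (1 - e) m → W m = zA * m - m * zB) :
    cornerCentral e zA ∧ cornerCentral (1 - e) zB := by
  refine ⟨⟨hzA, fun a ha => sub_eq_zero.mp <|
      hf.1 _ ((hzA.mul he he ha).sub (ha.mul he he hzA)) fun m hm => ?_⟩,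
    ⟨hzB, fun b hb => sub_eq_zero.mp <|
      hf.2 _ ((hzB.mul he.one_sub he.one_sub hb).sub (hb.mul he.one_sub he.one_sub hzB))
        fun m hm => ?_⟩⟩
  · have h := hWz _ (ha.mul he he.one_sub hm)
    rw [hW.map_mul_left a m ha hm, hWz m hm] at h
    calc (zA * a - a * zA) * m = zA * (a * m) - a * m * zB - a * (zA * m - m * zB) := by
          noncomm_ring
      _ = 0 := by rw [h, sub_self]
  · have h := hWz _ (hm.mul he he.one_sub hb)
    rw [hW.map_mul_right b m hb hm, hWz m hm] at h
    calc m * (zB * b - b * zB) = (zA * (m * b) - m * b * zB) - (zA * m - m * zB) * b := by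
          noncomm_ring
      _ = 0 := by rw [h, sub_self]

/-- `g ↦ W (e g (1 - e))` is a derivation of `G`; it is inner, and (H1) moves the `B`-part of
the implementing element to the `A`-side (and vice versa). -/
theorem exists_cornerCentral (ht : IsTriangularIdem e) (hf : Faithful e) (h1 : H1P e)
    (h5 : DerInner R G) (hlin : IsLinearMap R W) (hW : IsBimodHom e W) :
    ∃ c c', cornerCentral e c ∧ cornerCentral (1 - e) c' ∧
      ∀ m, corner e (1 - e) m → W m = c * m ∧ W m = m * c' := by
  have hA := corner_mul_mul ht.idem ht.idem
  have hM := corner_mul_mul ht.idem ht.idem.one_sub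
  have hB := corner_mul_mul ht.idem.one_sub ht.idem.one_sub
  have hDlin : IsLinearMap R fun g => W (e * g * (1 - e)) :=
    (IsLinearMap.mk' W hlin ∘ₗ LinearMap.mulRight R (1 - e) ∘ₗ
      LinearMap.mulLeft R e).isLinear
  have hDder : ∀ g h : G, W (e * (g * h) * (1 - e))
      = W (e * g * (1 - e)) * h + g * W (e * h * (1 - e)) := fun g h => by
    rw [ht.idem_mul_mul_compl, hlin.map_add, hW.map_mul_left _ _ (hA g) (hM h),
      hW.map_mul_right _ _ (hB h) (hM g), ← ht.mul_corner_eq g (hW.mapsTo _ (hM h)),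
      ← ht.corner_mul_eq h (hW.mapsTo _ (hM g)), add_comm]
  obtain ⟨g0, hg0⟩ := h5 _ hDlin hDder
  have hWg0 : ∀ m, corner e (1 - e) m → W m = e * g0 * e * m - m * ((1 - e) * g0 * (1 - e)) :=
    fun m hm => by
      have h := hg0 m
      rw [hm] at h
      rw [h, ← ht.brk_of_corner g0 hm, brk]
  obtain ⟨hzA, hzB⟩ := hW.cornerCentral_of_eq ht.idem hf (hA g0) (hB g0) hWg0
  obtain ⟨w, hw, hwB⟩ := h1.2 _ hzB
  obtain ⟨w', hw', hwA⟩ := h1.1 _ hzA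
  refine ⟨e * g0 * e - e * w * e, (1 - e) * w' * (1 - e) - (1 - e) * g0 * (1 - e),
    hzA.sub (hw.cornerCentral ht.idem), (hw'.cornerCentral ht.idem.one_sub).sub hzB,
    fun m hm => ⟨?_, ?_⟩⟩
  · rw [hWg0 m hm, sub_mul (e * g0 * e), hwB, hw.mul_corner_eq ht.idem ht.idem.one_sub hm]
  · rw [hWg0 m hm, mul_sub m ((1 - e) * w' * (1 - e)), hwA,
      hw'.mul_corner_eq ht.idem ht.idem.one_sub hm]

theorem eq_zero (ht : IsTriangularIdem e) (hf : Faithful e) (h1 : H1P e) (h2 : H2P e)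
    (h5 : DerInner R G) (hlin : IsLinearMap R W) (hW : IsBimodHom e W)
    (hA : ∀ a a' m, corner e e a → corner e e a' → corner e (1 - e) m → brk a a' * W m = 0)
    (hB : ∀ b b' m, corner (1 - e) (1 - e) b → corner (1 - e) (1 - e) b' →
      corner e (1 - e) m →
      W m * brk b b' = 0)
    {m : G} (hm : corner e (1 - e) m) : W m = 0 := by
  obtain ⟨c, c', hc, hc', hWc⟩ := hW.exists_cornerCentral ht hf h1 h5 hlin
  rcases h2 with hA2 | hB2
  · have hc0 : c = 0 := hA2.eq_zero ht.idem hc fun a a' ha ha' =>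
      hf.1 _ (hc.1.mul ht.idem ht.idem (ha.brk ht.idem ha')) fun m hm => by
        rw [hc.2 _ (ha.brk ht.idem ha'), mul_assoc, ← (hWc m hm).1, hA a a' m ha ha' hm]
    rw [(hWc m hm).1, hc0, zero_mul]
  · have hc0 : c' = 0 := hB2.eq_zero ht.idem.one_sub hc' fun b b' hb hb' =>
      hf.2 _ (hc'.1.mul ht.idem.one_sub ht.idem.one_sub (hb.brk ht.idem.one_sub hb'))
        fun m hm => by rw [← mul_assoc, ← (hWc m hm).2, hB b b' m hb hb' hm]
    rw [(hWc m hm).2, hc0, mul_zero]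

end IsBimodHom

theorem central_of_corner_eq_zero {G : Type*} [Ring G] {e z : G} (ht : IsTriangularIdem e)
    (hf : Faithful e) (hz : e * z * (1 - e) = 0) (hzM : ∀ m, corner e (1 - e) m → brk z m = 0) :
    central z := by
  have hA := corner_mul_mul ht.idem ht.idem
  have hM := corner_mul_mul ht.idem ht.idem.one_sub
  have hB := corner_mul_mul ht.idem.one_sub ht.idem.one_sub
  obtain ⟨hzA, hzB⟩ := IsBimodHom.zero.cornerCentral_of_eq ht.idem hf (hA z) (hB z)
    fun m hm => by rw [← ht.brk_of_corner z hm, hzM m hm]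
  have hsplit : z = e * z * e + (1 - e) * z * (1 - e) := by
    have h := ht.peirce z
    rwa [hz, add_zero, eq_comm] at h
  have hcommA : ∀ a, corner e e a → z * a = a * z := fun a ha => by
    rw [hsplit, add_mul, mul_add, hzA.2 a ha, (hB z).mul_eq_zero ha ht.idem.one_sub_mul_self,
      ha.mul_eq_zero (hB z) ht.idem.mul_one_sub_self]
  have hcommB : ∀ b, corner (1 - e) (1 - e) b → z * b = b * z := fun b hb => by
    rw [hsplit, add_mul, mul_add, hzB.2 b hb, (hA z).mul_eq_zero hb ht.idem.mul_one_sub_self,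
      hb.mul_eq_zero (hA z) ht.idem.one_sub_mul_self]
  intro g
  have h : z * g - g * z = (z * (e * g * e) - e * g * e * z) + brk z (e * g * (1 - e))
      + (z * ((1 - e) * g * (1 - e)) - (1 - e) * g * (1 - e) * z) := by
    conv_lhs => rw [← ht.peirce g]
    rw [brk]
    noncomm_ring
  rw [← sub_eq_zero, h, hcommA _ (hA g), hzM _ (hM g), hcommB _ (hB g), sub_self, sub_self,
    add_zero, add_zero]

def IsLieDer {G : Type*} [Ring G] (d : G → G) : Prop :=
  ∀ a b : G, d (brk a b) = brk (d a) b + brk a (d b)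

namespace IsLieDer

variable {G : Type*} [Ring G] {e a b m : G} {d : G → G}

theorem map_zero (hd : IsLieDer d) : d 0 = 0 := by
  simpa [brk] using hd 0 0

theorem corner_apply (ht : IsTriangularIdem e) (hd : IsLieDer d) (hm : corner e (1 - e) m) :
    corner e (1 - e) (d m) := by
  have h := hd e m
  rw [brk_idem_of_corner ht.idem hm] at h
  exact (ht.corner_of_eq_add_brk (ht.corner_brk _ hm) h).2

theorem brk_apply_idem (ht : IsTriangularIdem e) (hd : IsLieDer d) (hm : corner e (1 - e) m) :
    brk (d e) m = 0 := by
  have h := hd e m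
  rw [brk_idem_of_corner ht.idem hm] at h
  exact (ht.corner_of_eq_add_brk (ht.corner_brk _ hm) h).1

theorem idem_mul_apply_mul_compl_of_corner_left (he : IsIdempotentElem e) (hd : IsLieDer d)
    (ha : corner e e a) : e * d a * (1 - e) = a * (e * d e * (1 - e)) := by
  have h := congrArg (fun z => e * z * (1 - e)) (hd a e)
  simp only [brk_idem_of_corner_left he ha, hd.map_zero, mul_zero, zero_mul, mul_add, add_mul,
    mul_brk_idem_mul he, mul_brk_mul_of_corner_left he ha] at h
  exact neg_add_eq_zero.mp h.symm

theorem idem_mul_apply_mul_compl_of_corner_right (he : IsIdempotentElem e) (hd : IsLieDer d)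
    (hb : corner (1 - e) (1 - e) b) : e * d b * (1 - e) = -(e * d e * (1 - e) * b) := by
  have h := congrArg (fun z => e * z * (1 - e)) (hd b e)
  simp only [brk_idem_of_corner_right he hb, hd.map_zero, mul_zero, zero_mul, mul_add, add_mul,
    mul_brk_idem_mul he, mul_brk_mul_of_corner_right he hb] at h
  exact neg_add_eq_zero.mp h.symm

theorem isBimodHom (ht : IsTriangularIdem e) (hd : IsLieDer d)
    (hcomm : ∀ g m, corner e (1 - e) m → brk (d g) m = 0) : IsBimodHom e d where
  mapsTo _ hm := hd.corner_apply ht hm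
  map_mul_left a m ha hm := by
    rw [← brk_of_corner_left ht.idem ha hm, hd, hcomm a m hm, zero_add,
      brk_of_corner_left ht.idem ha (hd.corner_apply ht hm)]
  map_mul_right b m hb hm := by
    have h : brk m (d b) = 0 := by rw [brk, ← neg_sub, ← brk, hcomm b m hm, neg_zero]
    rw [← brk_of_corner_right ht.idem hm hb, hd, h, add_zero,
      brk_of_corner_right ht.idem (hd.corner_apply ht hm) hb]

theorem idem_mul_apply_mul_compl (ht : IsTriangularIdem e) (hd : IsLieDer d)
    (hadd : ∀ u v, d (u + v) = d u + d v) (hM : ∀ m, corner e (1 - e) m → d m = 0) (g : G) :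
    e * d g * (1 - e) = brk g (e * d e * (1 - e)) := by
  have hg : d g = d (e * g * e) + d (e * g * (1 - e)) + d ((1 - e) * g * (1 - e)) := by
    rw [← hadd, ← hadd, ht.peirce]
  rw [hg, hM _ (corner_mul_mul ht.idem ht.idem.one_sub g), add_zero, mul_add, add_mul,
    hd.idem_mul_apply_mul_compl_of_corner_left ht.idem (corner_mul_mul ht.idem ht.idem g),
    hd.idem_mul_apply_mul_compl_of_corner_right ht.idem
      (corner_mul_mul ht.idem.one_sub ht.idem.one_sub g),
    ht.brk_of_corner g (corner_mul_mul ht.idem ht.idem.one_sub _)]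
  exact (sub_eq_add_neg _ _).symm

theorem brk_apply_eq_zero (ht : IsTriangularIdem e) (hd : IsLieDer d)
    (hM : ∀ m, corner e (1 - e) m → d m = 0) (g : G) (hm : corner e (1 - e) m) :
    brk (d g) m = 0 := by
  have h := hd g m
  rw [hM _ (ht.corner_brk g hm), hM m hm, show brk g (0 : G) = 0 by simp [brk], add_zero] at h
  exact h.symm

end IsLieDer

theorem exists_pair_ne_of_three_le {n : ℕ} (hn : 3 ≤ n) (j : Fin n) :
    ∃ p q : Fin n, p ≠ q ∧ p ≠ j ∧ q ≠ j := by
  have h : 1 < (Finset.univ.erase j).card := by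
    rw [Finset.card_erase_of_mem (Finset.mem_univ j), Finset.card_univ, Fintype.card_fin]
    omega
  obtain ⟨p, hp, q, hq, hpq⟩ := Finset.one_lt_card.mp h
  exact ⟨p, q, hpq, Finset.ne_of_mem_erase hp, Finset.ne_of_mem_erase hq⟩

namespace IsNLieDer

variable {R : Type*} [CommRing R] {G : Type*} [Ring G] [Algebra R G] {e a a' b b' m : G}
  {n : ℕ} {φ : (Fin n → G) → G}

theorem isLieDer (hφ : IsNLieDer R φ) (x : Fin n → G) (i : Fin n) :
    IsLieDer fun t => φ (update x i t) :=
  (hφ i x).2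

theorem apply_update_add (hφ : IsNLieDer R φ) (x : Fin n → G) (i : Fin n) (u v : G) :
    φ (update x i (u + v)) = φ (update x i u) + φ (update x i v) :=
  (hφ i x).1.map_add u v

theorem cons {φ : (Fin (n + 1) → G) → G} (hφ : IsNLieDer R φ) (c : G) :
    IsNLieDer R fun y : Fin n → G => φ (Fin.cons c y) := by
  intro i y
  simp only [Fin.cons_update]
  exact hφ i.succ (Fin.cons c y)

theorem corner_apply (ht : IsTriangularIdem e) (hφ : IsNLieDer R φ) {x : Fin n → G} {j : Fin n}
    (hxj : corner e (1 - e) (x j)) : corner e (1 - e) (φ x) := by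
  have h := (hφ.isLieDer x j).corner_apply ht hxj
  rwa [update_eq_self] at h

theorem brk_apply_eq_zero_of_eq_idem (ht : IsTriangularIdem e) (hφ : IsNLieDer R φ)
    {x : Fin n → G} {p : Fin n} (hxp : x p = e) (hm : corner e (1 - e) m) : brk (φ x) m = 0 := by
  have h := (hφ.isLieDer x p).brk_apply_idem ht hm
  rwa [← hxp, update_eq_self] at h

theorem isBimodHom_update (ht : IsTriangularIdem e) (hφ : IsNLieDer R φ) {x : Fin n → G}
    {j k : Fin n} (hkj : k ≠ j) (hxk : corner e (1 - e) (x k) ∨ x k = e) :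
    IsBimodHom e fun t => φ (update x j t) :=
  (hφ.isLieDer x j).isBimodHom ht fun g m hm => by
    rcases hxk with hxk | hxk
    · have hc : corner e (1 - e) (φ (update x j g)) :=
        hφ.corner_apply ht (j := k) (by rwa [update_of_ne hkj])
      rw [brk, hc.mul_eq_zero hm ht.idem.one_sub_mul_self,
        hm.mul_eq_zero hc ht.idem.one_sub_mul_self, sub_self]
    · exact hφ.brk_apply_eq_zero_of_eq_idem ht (p := k) (by rwa [update_of_ne hkj]) hm

theorem apply_update_of_corner_left (ht : IsTriangularIdem e) (hφ : IsNLieDer R φ)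
    {x : Fin n → G} {i j : Fin n} (hij : i ≠ j) (hxj : corner e (1 - e) (x j))
    (ha : corner e e a) : φ (update x i a) = a * φ (update x i e) := by
  have hc : ∀ t, corner e (1 - e) (φ (update x i t)) := fun t =>
    hφ.corner_apply ht (j := j) (by rwa [update_of_ne (Ne.symm hij)])
  have h := (hφ.isLieDer x i).idem_mul_apply_mul_compl_of_corner_left ht.idem ha
  rwa [hc a, hc e] at h

theorem apply_update_of_corner_right (ht : IsTriangularIdem e) (hφ : IsNLieDer R φ)
    {x : Fin n → G} {i j : Fin n} (hij : i ≠ j) (hxj : corner e (1 - e) (x j))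
    (hb : corner (1 - e) (1 - e) b) : φ (update x i b) = -(φ (update x i e) * b) := by
  have hc : ∀ t, corner e (1 - e) (φ (update x i t)) := fun t =>
    hφ.corner_apply ht (j := j) (by rwa [update_of_ne (Ne.symm hij)])
  have h := (hφ.isLieDer x i).idem_mul_apply_mul_compl_of_corner_right ht.idem hb
  rwa [hc b, hc e] at h


/-- Feed `a` and `a'` into the two slots holding `e`, in either order. -/
theorem brk_mul_idem_mul_apply_mul_compl (he : IsIdempotentElem e) (hφ : IsNLieDer R φ)
    {x : Fin n → G} {p q : Fin n} (hpq : p ≠ q) (hxp : x p = e) (hxq : x q = e)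
    (ha : corner e e a) (ha' : corner e e a') : brk a a' * (e * φ x * (1 - e)) = 0 := by
  have hA : ∀ y i c, corner e e c →
      e * φ (update y i c) * (1 - e) = c * (e * φ (update y i e) * (1 - e)) := fun y i _ hc =>
    (hφ.isLieDer y i).idem_mul_apply_mul_compl_of_corner_left he hc
  have hp : update x p e = x := update_eq_self_iff.mpr hxp.symm
  have hq : update x q e = x := update_eq_self_iff.mpr hxq.symm
  have h1 : e * φ (update (update x p a) q a') * (1 - e) = a' * (a * (e * φ x * (1 - e))) := by
    rw [hA _ q a' ha', update_eq_self_iff.mpr (by rw [update_of_ne hpq.symm, hxq]), hA _ p a ha,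
      hp]
  have h2 : e * φ (update (update x p a) q a') * (1 - e) = a * (a' * (e * φ x * (1 - e))) := by
    rw [update_comm hpq, hA _ p a ha, update_eq_self_iff.mpr (by rw [update_of_ne hpq, hxp]),
      hA _ q a' ha', hq]
  rw [brk, sub_mul, mul_assoc a, mul_assoc a', ← h1, ← h2, sub_self]

theorem idem_mul_apply_mul_compl_mul_brk (he : IsIdempotentElem e) (hφ : IsNLieDer R φ)
    {x : Fin n → G} {p q : Fin n} (hpq : p ≠ q) (hxp : x p = e) (hxq : x q = e)
    (hb : corner (1 - e) (1 - e) b) (hb' : corner (1 - e) (1 - e) b') :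
    e * φ x * (1 - e) * brk b b' = 0 := by
  have hB : ∀ y i c, corner (1 - e) (1 - e) c →
      e * φ (update y i c) * (1 - e) = -(e * φ (update y i e) * (1 - e) * c) := fun y i _ hc =>
    (hφ.isLieDer y i).idem_mul_apply_mul_compl_of_corner_right he hc
  have hp : update x p e = x := update_eq_self_iff.mpr hxp.symm
  have hq : update x q e = x := update_eq_self_iff.mpr hxq.symm
  have h1 : e * φ (update (update x p b) q b') * (1 - e) = e * φ x * (1 - e) * b * b' := by
    rw [hB _ q b' hb', update_eq_self_iff.mpr (by rw [update_of_ne hpq.symm, hxq]), hB _ p b hb,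
      hp, neg_mul, neg_neg]
  have h2 : e * φ (update (update x p b) q b') * (1 - e) = e * φ x * (1 - e) * b' * b := by
    rw [update_comm hpq, hB _ p b hb, update_eq_self_iff.mpr (by rw [update_of_ne hpq, hxp]),
      hB _ q b' hb', hq, neg_mul, neg_neg]
  rw [brk, mul_sub, ← mul_assoc _ b, ← mul_assoc _ b', ← h1, ← h2, sub_self]

/-- With two arguments in `M`, both slot maps are bimodule maps: feed `a` and `a'` into the two
slots in either order. -/
theorem brk_mul_apply_of_corner (ht : IsTriangularIdem e) (hφ : IsNLieDer R φ)
    {x : Fin n → G} {i j : Fin n} (hij : i ≠ j) (hxi : corner e (1 - e) (x i))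
    (hxj : corner e (1 - e) (x j)) (ha : corner e e a) (ha' : corner e e a') :
    brk a a' * φ x = 0 := by
  have hS : ∀ {k l : Fin n} {y : Fin n → G}, k ≠ l → corner e (1 - e) (y k) →
      IsBimodHom e fun t => φ (update y l t) := fun hkl hyk =>
    hφ.isBimodHom_update ht hkl (Or.inl hyk)
  have hax : corner e (1 - e) (update x i (a * x i) i) := by
    rw [update_self]; exact ha.mul ht.idem ht.idem.one_sub hxi
  have hax' : corner e (1 - e) (update x j (a' * x j) j) := by
    rw [update_self]; exact ha'.mul ht.idem ht.idem.one_sub hxj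
  have h1 : φ (update (update x i (a * x i)) j (a' * x j)) = a' * (a * φ x) := by
    rw [(hS hij hax).map_mul_left _ _ ha' hxj,
      update_eq_self_iff.mpr (update_of_ne hij.symm _ _).symm,
      (hS hij.symm hxj).map_mul_left _ _ ha hxi, update_eq_self]
  have h2 : φ (update (update x i (a * x i)) j (a' * x j)) = a * (a' * φ x) := by
    rw [update_comm hij, (hS hij.symm hax').map_mul_left _ _ ha hxi,
      update_eq_self_iff.mpr (update_of_ne hij _ _).symm,
      (hS hij hxi).map_mul_left _ _ ha' hxj, update_eq_self]
  rw [brk, sub_mul, mul_assoc a, mul_assoc a', ← h1, ← h2, sub_self]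

theorem apply_mul_brk_of_corner (ht : IsTriangularIdem e) (hφ : IsNLieDer R φ)
    {x : Fin n → G} {i j : Fin n} (hij : i ≠ j) (hxi : corner e (1 - e) (x i))
    (hxj : corner e (1 - e) (x j)) (hb : corner (1 - e) (1 - e) b)
    (hb' : corner (1 - e) (1 - e) b') : φ x * brk b b' = 0 := by
  have hS : ∀ {k l : Fin n} {y : Fin n → G}, k ≠ l → corner e (1 - e) (y k) →
      IsBimodHom e fun t => φ (update y l t) := fun hkl hyk =>
    hφ.isBimodHom_update ht hkl (Or.inl hyk)
  have hxb : corner e (1 - e) (update x i (x i * b) i) := by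
    rw [update_self]; exact hxi.mul ht.idem ht.idem.one_sub hb
  have hxb' : corner e (1 - e) (update x j (x j * b') j) := by
    rw [update_self]; exact hxj.mul ht.idem ht.idem.one_sub hb'
  have h1 : φ (update (update x i (x i * b)) j (x j * b')) = φ x * b * b' := by
    rw [(hS hij hxb).map_mul_right _ _ hb' hxj,
      update_eq_self_iff.mpr (update_of_ne hij.symm _ _).symm,
      (hS hij.symm hxj).map_mul_right _ _ hb hxi, update_eq_self]
  have h2 : φ (update (update x i (x i * b)) j (x j * b')) = φ x * b' * b := by
    rw [update_comm hij, (hS hij.symm hxb').map_mul_right _ _ hb hxi,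
      update_eq_self_iff.mpr (update_of_ne hij _ _).symm,
      (hS hij hxi).map_mul_right _ _ hb' hxj, update_eq_self]
  rw [brk, mul_sub, ← mul_assoc _ b, ← mul_assoc _ b', ← h1, ← h2, sub_self]

theorem apply_eq_zero_of_isBimodHom (ht : IsTriangularIdem e) (hf : Faithful e) (h1 : H1P e)
    (h2 : H2P e) (h5 : DerInner R G) (hφ : IsNLieDer R φ) {x : Fin n → G} {j k : Fin n}
    (hkj : k ≠ j) (hxk : corner e (1 - e) (x k) ∨ x k = e) (hxj : corner e (1 - e) (x j))
    (hA : ∀ a a' m, corner e e a → corner e e a' → corner e (1 - e) m →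
      brk a a' * φ (update x j m) = 0)
    (hB : ∀ b b' m, corner (1 - e) (1 - e) b → corner (1 - e) (1 - e) b' →
      corner e (1 - e) m →
      φ (update x j m) * brk b b' = 0) :
    φ x = 0 := by
  have h := (hφ.isBimodHom_update ht hkj hxk).eq_zero ht hf h1 h2 h5 (hφ j x).1 hA hB hxj
  rwa [update_eq_self] at h

theorem apply_eq_zero_of_two_corner (ht : IsTriangularIdem e) (hf : Faithful e) (h1 : H1P e)
    (h2 : H2P e) (h5 : DerInner R G) (hφ : IsNLieDer R φ) {x : Fin n → G} {i j : Fin n}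
    (hij : i ≠ j) (hxi : corner e (1 - e) (x i)) (hxj : corner e (1 - e) (x j)) : φ x = 0 := by
  have hxi' : ∀ m, corner e (1 - e) (update x j m i) := fun m => by rwa [update_of_ne hij]
  have hxj' : ∀ {m}, corner e (1 - e) m → corner e (1 - e) (update x j m j) := fun hm => by
    rwa [update_self]
  exact hφ.apply_eq_zero_of_isBimodHom ht hf h1 h2 h5 hij (Or.inl hxi) hxj
    (fun _ _ m ha ha' hm => hφ.brk_mul_apply_of_corner ht hij (hxi' m) (hxj' hm) ha ha')
    (fun _ _ m hb hb' hm => hφ.apply_mul_brk_of_corner ht hij (hxi' m) (hxj' hm) hb hb')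

theorem apply_eq_zero_of_eq_idem (ht : IsTriangularIdem e) (hf : Faithful e) (h1 : H1P e)
    (h2 : H2P e) (h5 : DerInner R G) (hφ : IsNLieDer R φ) {x : Fin n → G} {p q j : Fin n}
    (hpq : p ≠ q) (hpj : p ≠ j) (hqj : q ≠ j) (hxp : x p = e) (hxq : x q = e)
    (hxj : corner e (1 - e) (x j)) : φ x = 0 := by
  have hxp' : ∀ m, update x j m p = e := fun m => by rwa [update_of_ne hpj]
  have hxq' : ∀ m, update x j m q = e := fun m => by rwa [update_of_ne hqj]
  have hc : ∀ {m}, corner e (1 - e) m → e * φ (update x j m) * (1 - e) = φ (update x j m) :=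
    fun hm => hφ.corner_apply ht (j := j) (by rwa [update_self])
  refine hφ.apply_eq_zero_of_isBimodHom ht hf h1 h2 h5 hpj (Or.inr hxp) hxj
    (fun _ _ m ha ha' hm => ?_) (fun _ _ m hb hb' hm => ?_)
  · rw [← hc hm]
    exact hφ.brk_mul_idem_mul_apply_mul_compl ht.idem hpq (hxp' m) (hxq' m) ha ha'
  · rw [← hc hm]
    exact hφ.idem_mul_apply_mul_compl_mul_brk ht.idem hpq (hxp' m) (hxq' m) hb hb'

/-- Expand each argument other than the `j`-th into its Peirce components: the `A`- and
`B`-components reduce it to `e`, the `M`-component leaves two arguments in `M`. -/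
theorem apply_eq_zero_of_corner (ht : IsTriangularIdem e) (hf : Faithful e) (h1 : H1P e)
    (h2 : H2P e) (h5 : DerInner R G) (hφ : IsNLieDer R φ) (hn : 3 ≤ n) {x : Fin n → G}
    {j : Fin n} (hxj : corner e (1 - e) (x j)) : φ x = 0 := by
  obtain ⟨p, q, hpq, hpj, hqj⟩ := exists_pair_ne_of_three_le hn j
  suffices h : ∀ S : Finset (Fin n), ∀ x : Fin n → G, corner e (1 - e) (x j) →
      (∀ i ∉ S, i ≠ j → x i = e) → φ x = 0 from
    h Finset.univ x hxj fun i hi => absurd (Finset.mem_univ i) hi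
  intro S
  induction S using Finset.induction_on with
  | empty =>
    exact fun x hxj hx => hφ.apply_eq_zero_of_eq_idem ht hf h1 h2 h5 hpq hpj hqj
      (hx p (Finset.notMem_empty p) hpj) (hx q (Finset.notMem_empty q) hqj) hxj
  | insert i S _ ih =>
    intro x hxj hx
    have hS : ∀ k ∉ S, k ≠ j → k ≠ i → x k = e := fun k hk hkj hki =>
      hx k (by simp [hk, hki]) hkj
    by_cases hij : i = j
    · subst hij
      exact ih x hxj fun k hk hkj => hS k hk hkj hkj
    have hxe : φ (update x i e) = 0 := by
      refine ih _ (by rwa [update_of_ne (Ne.symm hij)]) fun k hk hkj => ?_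
      by_cases hki : k = i
      · rw [hki, update_self]
      · rw [update_of_ne hki, hS k hk hkj hki]
    have hdec : φ x = φ (update x i (e * x i * e)) + φ (update x i (e * x i * (1 - e)))
        + φ (update x i ((1 - e) * x i * (1 - e))) := by
      conv_lhs => rw [← update_eq_self i x, ← ht.peirce (x i)]
      rw [hφ.apply_update_add, hφ.apply_update_add]
    rw [hdec, hφ.apply_update_of_corner_left ht hij hxj (corner_mul_mul ht.idem ht.idem _),
      hφ.apply_update_of_corner_right ht hij hxj
        (corner_mul_mul ht.idem.one_sub ht.idem.one_sub _),
      hφ.apply_eq_zero_of_two_corner ht hf h1 h2 h5 (x := update x i (e * x i * (1 - e))) hij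
        (by rw [update_self]; exact corner_mul_mul ht.idem ht.idem.one_sub _)
        (by rwa [update_of_ne (Ne.symm hij)]),
      hxe, mul_zero, zero_mul, neg_zero, add_zero, add_zero]

theorem idem_mul_apply_mul_compl_eq_iterBr (ht : IsTriangularIdem e) :
    ∀ {n : ℕ} {φ : (Fin n → G) → G}, IsNLieDer R φ →
      (∀ x j, corner e (1 - e) (x j) → φ x = 0) →
      ∀ x, e * φ x * (1 - e) = iterBr x (e * φ (fun _ => e) * (1 - e))
  | 0, φ, _, _, x => by rw [Subsingleton.elim x fun _ => e]; rfl
  | n + 1, φ, hφ, hM, x => by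
    have h := (hφ.isLieDer x 0).idem_mul_apply_mul_compl ht (hφ.apply_update_add x 0)
      (fun m hm => hM _ 0 (by rwa [update_self])) (x 0)
    have hx : update x 0 e = Fin.cons e (Fin.tail x) := by
      conv_lhs => rw [← Fin.cons_self_tail x]
      exact Fin.update_cons_zero ..
    have hconst : (Fin.cons e fun _ : Fin n => e : Fin (n + 1) → G) = fun _ => e :=
      Fin.cons_self_tail fun _ : Fin (n + 1) => e
    rw [update_eq_self, hx, idem_mul_apply_mul_compl_eq_iterBr ht (hφ.cons e)
      (fun y j hyj => hM _ j.succ (by rwa [Fin.cons_succ])) (Fin.tail x), hconst] at h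
    exact h

theorem brk_apply_eq_zero (ht : IsTriangularIdem e) (hφ : IsNLieDer R φ)
    (hM : ∀ x j, corner e (1 - e) (x j) → φ x = 0) (hn : 0 < n) (x : Fin n → G)
    (hm : corner e (1 - e) m) : brk (φ x) m = 0 := by
  have h := (hφ.isLieDer x ⟨0, hn⟩).brk_apply_eq_zero ht
    (fun m hm => hM _ ⟨0, hn⟩ (by rwa [update_self])) (x ⟨0, hn⟩) hm
  rwa [update_eq_self] at h

theorem brk_brk_idem_mul_apply_const_mul_compl (ht : IsTriangularIdem e) (hφ : IsNLieDer R φ)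
    (hn : 2 ≤ n) (u v : G) : brk (brk u v) (e * φ (fun _ => e) * (1 - e)) = 0 := by
  have h01 : (⟨0, by omega⟩ : Fin n) ≠ ⟨1, by omega⟩ := by simp [Fin.ext_iff]
  rw [ht.brk_brk_of_corner u v (corner_mul_mul ht.idem ht.idem.one_sub _),
    hφ.brk_mul_idem_mul_apply_mul_compl ht.idem h01 rfl rfl (corner_mul_mul ht.idem ht.idem u)
      (corner_mul_mul ht.idem ht.idem v),
    hφ.idem_mul_apply_mul_compl_mul_brk ht.idem h01 rfl rfl
      (corner_mul_mul ht.idem.one_sub ht.idem.one_sub u)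
      (corner_mul_mul ht.idem.one_sub ht.idem.one_sub v), sub_zero]

end IsNLieDer

theorem nLieDer_triangular_decomposition_general {R : Type*} [CommRing R]
    {G : Type*} [Ring G] [Algebra R G] (e : G) (he : e * e = e)
    (htri : ∀ g : G, (1 - e) * g * e = 0) (hf : Faithful e)
    (h1 : H1P e) (h2 : H2P e) (h5 : DerInner R G)
    (n : ℕ) (hn : 3 ≤ n)
    (φ : (Fin n → G) → G) (hφ : IsNLieDer R φ) :
    (∀ u v : G, brk (brk u v) (e * φ (fun _ => e) * (1 - e)) = 0) ∧
    ∀ x : Fin n → G, central (φ x - iterBr x (e * φ (fun _ => e) * (1 - e))) := by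
  have ht : IsTriangularIdem e := ⟨he, htri⟩
  have hM : ∀ x j, corner e (1 - e) (x j) → φ x = 0 := fun _ _ hxj =>
    hφ.apply_eq_zero_of_corner ht hf h1 h2 h5 hn hxj
  refine ⟨hφ.brk_brk_idem_mul_apply_const_mul_compl ht (by omega), fun x => ?_⟩
  set X₀ := e * φ (fun _ => e) * (1 - e)
  have hX : corner e (1 - e) (iterBr x X₀) :=
    ht.corner_iterBr (corner_mul_mul ht.idem ht.idem.one_sub _) x
  refine central_of_corner_eq_zero ht hf ?_ fun m hm => ?_
  · rw [mul_sub e, sub_mul (e * φ x), hφ.idem_mul_apply_mul_compl_eq_iterBr ht hM x, hX,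
      sub_self]
  · have h : brk (φ x - iterBr x X₀) m
        = brk (φ x) m - (iterBr x X₀ * m - m * iterBr x X₀) := by
      rw [brk, brk]; noncomm_ring
    rw [h, hφ.brk_apply_eq_zero ht hM (by omega) x hm,
      hX.mul_eq_zero hm ht.idem.one_sub_mul_self, hm.mul_eq_zero hX ht.idem.one_sub_mul_self,
      sub_self, sub_self]

theorem nLieDer_triangular_decomposition {R : Type*} [CommRing R]
    (htf : ∀ r : R, r + r = 0 → r = 0)
    {G : Type*} [Ring G] [Algebra R G] (e : G) (he : e * e = e)
    (he0 : e ≠ 0) (he1 : e ≠ 1)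
    (htri : ∀ g : G, (1 - e) * g * e = 0) (hf : Faithful e)
    (h1 : H1P e) (h2 : H2P e) (h5 : DerInner R G)
    (n : ℕ) (hn : 3 ≤ n)
    (φ : (Fin n → G) → G) (hφ : IsNLieDer R φ) :
    (∀ u v : G, brk (brk u v) (e * φ (fun _ => e) * (1 - e)) = 0) ∧
    ∀ x : Fin n → G, central (φ x - iterBr x (e * φ (fun _ => e) * (1 - e))) :=
  nLieDer_triangular_decomposition_general e he htri hf h1 h2 h5 n hn φ hφ
end
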